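/- arXiv:1502.04334 — 2 statements merged into one kernel-verified Lean document; each statement's English description precedes it below -/
import Mathlib

section
/- (Two Pencils Inequality, case b) Let 𝓛 be a configuration of d mutually distinct lines in the projective plane over a field K with exactly s singular points, s ≥ 2, and let P_1 and P_2 be two distinct singular points of 𝓛 such that some line of 𝓛 passes through both P_1 and P_2. Then (m_𝓛(P_1) − 1)·(m_𝓛(P_2) − 1) + 2 ≤ s. -/
/-- Points of the projective plane over `K`. -/
abbrev PPoint (K : Type*) [Field K] := Projectivization K (Fin 3 → K)

/-- Lines of the projective plane over `K`: points of the projectivization of the dual space. -/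
abbrev PLine (K : Type*) [Field K] := Projectivization K (Module.Dual K (Fin 3 → K))

/-- A point lies on a line iff a representative functional of the line vanishes on a
representative vector of the point. -/
def OnLine {K : Type*} [Field K] (P : PPoint K) (L : PLine K) : Prop :=
  L.rep P.rep = 0

/-- The multiplicity of a point `P` with respect to a configuration `𝓛`:
the number of lines of `𝓛` passing through `P`. -/
noncomputable def mult {K : Type*} [Field K] (𝓛 : Finset (PLine K)) (P : PPoint K) : ℕ :=
  {L : PLine K | L ∈ 𝓛 ∧ OnLine P L}.ncard

/-- The singular points of a configuration: points lying on at least two of its lines. -/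
def SingPts {K : Type*} [Field K] (𝓛 : Finset (PLine K)) : Set (PPoint K) :=
  {P | 2 ≤ mult 𝓛 P}

/-- `tk 𝓛 k` is the number of points of multiplicity exactly `k` (used for `k ≥ 2`). -/
noncomputable def tk {K : Type*} [Field K] (𝓛 : Finset (PLine K)) (k : ℕ) : ℕ :=
  {P : PPoint K | mult 𝓛 P = k}.ncard

/-- The linear Harbourne constant of a configuration `𝓛` of lines:
`(d² − Σ_P m_𝓛(P)²)/s` where the sum runs over the `s` singular points of `𝓛`. -/
noncomputable def HL {K : Type*} [Field K] (𝓛 : Finset (PLine K)) : ℚ :=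
  ((𝓛.card : ℚ) ^ 2 - ∑ᶠ P ∈ SingPts 𝓛, (mult 𝓛 P : ℚ) ^ 2) / ((SingPts 𝓛).ncard : ℚ)

section aux
variable {K : Type*} [Field K]

lemma rep_indep {V : Type*} [AddCommGroup V] [Module K V]
    {P Q : Projectivization K V} (h : P ≠ Q) :
    LinearIndependent K ![P.rep, Q.rep] := by
  rw [linearIndependent_fin2]
  refine ⟨by simp [Projectivization.rep_nonzero], fun a ha => ?_⟩
  simp only [Matrix.cons_val_one, Matrix.head_cons, Matrix.cons_val_zero] at ha
  apply h
  rw [← Projectivization.mk_rep P, ← Projectivization.mk_rep Q]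
  exact ((Projectivization.mk_eq_mk_iff' K _ _ P.rep_nonzero Q.rep_nonzero).2 ⟨a, ha⟩)

lemma onLine_mk {v : Fin 3 → K} (hv : v ≠ 0) (L : PLine K) :
    OnLine (Projectivization.mk K v hv) L ↔ L.rep v = 0 := by
  obtain ⟨a, ha⟩ := Projectivization.exists_smul_eq_mk_rep K v hv
  unfold OnLine
  rw [← ha, Units.smul_def, map_smul, smul_eq_zero]
  simp

lemma finrank_fin3 : Module.finrank K (Fin 3 → K) = 3 := by simp

lemma line_unique {P Q : PPoint K} (hPQ : P ≠ Q) {L₁ L₂ : PLine K}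
    (h1 : OnLine P L₁) (h2 : OnLine Q L₁) (h3 : OnLine P L₂) (h4 : OnLine Q L₂) :
    L₁ = L₂ := by
  by_contra hne
  have hfg : LinearIndependent K ![L₁.rep, L₂.rep] := rep_indep hne
  have hvw : LinearIndependent K ![P.rep, Q.rep] := rep_indep hPQ
  set W : Subspace K (Module.Dual K (Fin 3 → K)) :=
    Submodule.span K (Set.range ![L₁.rep, L₂.rep]) with hW
  have hWrank : Module.finrank K W = 2 := by
    rw [hW, finrank_span_eq_card hfg]; simp
  have hsum := W.finrank_add_finrank_dualCoannihilator_eq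
  rw [finrank_fin3, hWrank] at hsum
  have hmem : ∀ v : Fin 3 → K, L₁.rep v = 0 → L₂.rep v = 0 → v ∈ W.dualCoannihilator := by
    intro v hv1 hv2
    rw [Submodule.mem_dualCoannihilator]
    intro φ hφ
    induction hφ using Submodule.span_induction with
    | mem x hx => obtain ⟨i, rfl⟩ := hx; fin_cases i <;> simpa
    | zero => simp
    | add a b _ _ ha hb => simp [ha, hb]
    | smul c a _ ha => simp [ha]
  have hle : Submodule.span K (Set.range ![P.rep, Q.rep]) ≤ W.dualCoannihilator := by
    rw [Submodule.span_le]
    rintro x ⟨i, rfl⟩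
    fin_cases i
    · simpa using hmem _ h1 h3
    · simpa using hmem _ h2 h4
  have hge := Submodule.finrank_mono hle
  rw [finrank_span_eq_card hvw] at hge
  simp only [Fintype.card_fin] at hge
  omega

lemma exists_point_on (L₁ L₂ : PLine K) : ∃ P : PPoint K, OnLine P L₁ ∧ OnLine P L₂ := by
  set W : Subspace K (Module.Dual K (Fin 3 → K)) :=
    Submodule.span K (Set.range ![L₁.rep, L₂.rep]) with hW
  have hWle : Module.finrank K W ≤ 2 := by
    simpa [Set.finrank] using finrank_range_le_card (R := K) ![L₁.rep, L₂.rep]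
  have hsum := W.finrank_add_finrank_dualCoannihilator_eq
  rw [finrank_fin3] at hsum
  have hpos : W.dualCoannihilator ≠ ⊥ := by
    intro hbot
    rw [hbot, finrank_bot] at hsum; omega
  obtain ⟨v, hvmem, hvne⟩ := (Submodule.ne_bot_iff _).mp hpos
  rw [Submodule.mem_dualCoannihilator] at hvmem
  refine ⟨Projectivization.mk K v hvne, ?_, ?_⟩ <;> rw [onLine_mk]
  · exact hvmem _ (Submodule.subset_span ⟨0, rfl⟩)
  · exact hvmem _ (Submodule.subset_span ⟨1, rfl⟩)

end aux

/-- Two Pencils Inequality, case b): if some configuration line passes through both singular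
points `P₁` and `P₂`, then `(m(P₁) − 1)·(m(P₂) − 1) + 2 ≤ s`. -/
theorem two_pencils_b {K : Type*} [Field K] (d s : ℕ) (𝓛 : Finset (PLine K))
    (hd : 𝓛.card = d) (hs : (SingPts 𝓛).ncard = s) (hs2 : 2 ≤ s)
    (P₁ P₂ : PPoint K) (h1 : P₁ ∈ SingPts 𝓛) (h2 : P₂ ∈ SingPts 𝓛) (hne : P₁ ≠ P₂)
    (hline : ∃ L ∈ 𝓛, OnLine P₁ L ∧ OnLine P₂ L) :
    (mult 𝓛 P₁ - 1) * (mult 𝓛 P₂ - 1) + 2 ≤ s := by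

  classical
  obtain ⟨L₀, hL₀mem, hL₀1, hL₀2⟩ := hline
  have hmult : ∀ P : PPoint K, mult 𝓛 P = (𝓛.filter (fun L => OnLine P L)).card := by
    intro P
    rw [mult, show {L : PLine K | L ∈ 𝓛 ∧ OnLine P L} = ↑(𝓛.filter (fun L => OnLine P L)) by
      ext L; simp]
    exact Set.ncard_coe_finset _
  set S₁ := (𝓛.filter (fun L => OnLine P₁ L)).erase L₀ with hS₁
  set S₂ := (𝓛.filter (fun L => OnLine P₂ L)).erase L₀ with hS₂
  have hS₁card : S₁.card = mult 𝓛 P₁ - 1 := by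
    rw [hS₁, Finset.card_erase_of_mem (by simp [hL₀mem, hL₀1]), hmult]
  have hS₂card : S₂.card = mult 𝓛 P₂ - 1 := by
    rw [hS₂, Finset.card_erase_of_mem (by simp [hL₀mem, hL₀2]), hmult]
  choose φ hφ1 hφ2 using fun A B : PLine K => exists_point_on A B
  have hprops : ∀ A ∈ S₁, ∀ B ∈ S₂,
      A ≠ B ∧ φ A B ≠ P₁ ∧ φ A B ≠ P₂ ∧ φ A B ∈ SingPts 𝓛 := by
    intro A hA B hB
    simp only [hS₁, hS₂, Finset.mem_erase, Finset.mem_filter] at hA hB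
    obtain ⟨hAne, hAmem, hA1⟩ := hA
    obtain ⟨hBne, hBmem, hB2⟩ := hB
    have hAB : A ≠ B := by
      rintro rfl
      exact hAne (line_unique hne hA1 hB2 hL₀1 hL₀2)
    have hq1 : φ A B ≠ P₁ := by
      intro hq
      exact hBne (line_unique hne (hq ▸ hφ2 A B) hB2 hL₀1 hL₀2)
    have hq2 : φ A B ≠ P₂ := by
      intro hq
      exact hAne (line_unique hne hA1 (hq ▸ hφ1 A B) hL₀1 hL₀2)
    refine ⟨hAB, hq1, hq2, ?_⟩
    show 2 ≤ mult 𝓛 (φ A B)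
    rw [hmult]
    have hsub : ({A, B} : Finset (PLine K)) ⊆ 𝓛.filter (fun L => OnLine (φ A B) L) := by
      intro L hL
      simp only [Finset.mem_insert, Finset.mem_singleton] at hL
      rcases hL with rfl | rfl <;>
        simp [Finset.mem_filter, hAmem, hBmem, hφ1, hφ2]
    calc 2 = ({A, B} : Finset (PLine K)).card := (Finset.card_pair hAB).symm
      _ ≤ _ := Finset.card_le_card hsub
  have hinj : Set.InjOn (fun p : PLine K × PLine K => φ p.1 p.2) ↑(S₁ ×ˢ S₂) := by
    rintro ⟨A, B⟩ hAB ⟨A', B'⟩ hAB' heq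
    simp only [Finset.coe_product, Set.mem_prod, Finset.mem_coe] at hAB hAB'
    obtain ⟨hA, hB⟩ := hAB
    obtain ⟨hA', hB'⟩ := hAB'
    obtain ⟨_, hq1, hq2, _⟩ := hprops A hA B hB
    simp only at heq
    have heqA : A = A' :=
      line_unique hq1 (hφ1 A B) (by
        simp only [hS₁, Finset.mem_erase, Finset.mem_filter] at hA; exact hA.2.2)
        (heq ▸ hφ1 A' B') (by
        simp only [hS₁, Finset.mem_erase, Finset.mem_filter] at hA'; exact hA'.2.2)
    have heqB : B = B' :=
      line_unique hq2 (hφ2 A B) (by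
        simp only [hS₂, Finset.mem_erase, Finset.mem_filter] at hB; exact hB.2.2)
        (heq ▸ hφ2 A' B') (by
        simp only [hS₂, Finset.mem_erase, Finset.mem_filter] at hB'; exact hB'.2.2)
    exact Prod.ext heqA heqB
  set I : Finset (PPoint K) := (S₁ ×ˢ S₂).image (fun p => φ p.1 p.2) with hI
  have himg : ∀ Q ∈ I, Q ≠ P₁ ∧ Q ≠ P₂ ∧ Q ∈ SingPts 𝓛 := by
    intro Q hQ
    simp only [hI, Finset.mem_image, Finset.mem_product] at hQ
    obtain ⟨⟨A, B⟩, ⟨hA, hB⟩, rfl⟩ := hQ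
    obtain ⟨_, ha, hb, hc⟩ := hprops A hA B hB
    exact ⟨ha, hb, hc⟩
  have hP₂not : P₂ ∉ I := fun h => (himg _ h).2.1 rfl
  have hP₁not : P₁ ∉ insert P₂ I := by
    simp only [Finset.mem_insert]
    rintro (h | h)
    · exact hne h
    · exact (himg _ h).1 rfl
  set F : Finset (PPoint K) := insert P₁ (insert P₂ I) with hF
  have hFcard : F.card = (mult 𝓛 P₁ - 1) * (mult 𝓛 P₂ - 1) + 2 := by
    rw [hF, Finset.card_insert_of_notMem hP₁not, Finset.card_insert_of_notMem hP₂not,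
        hI, Finset.card_image_of_injOn hinj, Finset.card_product, hS₁card, hS₂card]
  have hsubF : ↑F ⊆ SingPts 𝓛 := by
    intro Q hQ
    simp only [hF, Finset.coe_insert, Set.mem_insert_iff, Finset.mem_coe] at hQ
    rcases hQ with rfl | rfl | hQ
    · exact h1
    · exact h2
    · exact (himg _ hQ).2.2
  have hfin : (SingPts 𝓛).Finite := by
    by_contra hinf
    have hinf' : (SingPts 𝓛).Infinite := hinf
    rw [hinf'.ncard] at hs
    omega
  have hle := Set.ncard_le_ncard hsubF hfin
  rw [Set.ncard_coe_finset, hFcard, hs] at hle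
  exact hle
end

section
/- The absolute linear Harbourne constant for 4 lines equals −4/3: for every field K and every configuration 𝓛 of 4 mutually distinct lines in the projective plane over K, H_L(K,𝓛) ≥ −4/3, and there exists a configuration 𝓛 of 4 mutually distinct lines in the projective plane over ℂ with H_L(ℂ,𝓛) = −4/3. -/
/-!
Two distinct lines meet in exactly one point, so counting ordered pairs of distinct lines of `𝓛`
by their intersection point gives `∑_P m(P) (m(P) - 1) = d (d - 1)`, and hence
`H_L(𝓛) = (d - ∑_P m(P)) / s`. As `m (m - 1) ≥ 3 m - 4` for `m ≥ 2`, this is at least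
`d (4 - d) / (3 s) - 4 / 3`, which is `-4/3` for `d = 4`. If all singular points are double
points, then `s = d (d - 1) / 2` and `H_L(𝓛) = 2 (2 - d) / (d - 1)`; four lines in general
position, such as `x = 0`, `y = 0`, `z = 0`, `x + y + z = 0`, therefore attain `-4/3`.
-/

open Projectivization Module Finset
open scoped LinearAlgebra.Projectivization

theorem Projectivization.eq_of_rep_mem_of_finrank_eq_one {K V : Type*} [Field K] [AddCommGroup V]
    [Module K V] {W : Submodule K V} (hW : finrank K W = 1) {p q : ℙ K V}
    (hp : p.rep ∈ W) (hq : q.rep ∈ W) : p = q := by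
  obtain ⟨c, hc⟩ := exists_smul_eq_of_finrank_eq_one hW (x := ⟨q.rep, hq⟩)
    (by simpa using q.rep_nonzero) ⟨p.rep, hp⟩
  rw [← mk_rep p, ← mk_rep q, mk_eq_mk_iff']
  exact ⟨c, congrArg Subtype.val hc⟩

section Incidence

variable {K : Type*} [Field K]

theorem onLine_mk_iff {v : Fin 3 → K} (hv : v ≠ 0) (L : PLine K) :
    OnLine (mk K v hv) L ↔ L.rep v = 0 := by
  obtain ⟨a, ha⟩ := exists_smul_eq_mk_rep K v hv
  rw [OnLine, ← ha, Units.smul_def, map_smul, smul_eq_zero, or_iff_right a.ne_zero]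

theorem onLine_mk_mk_iff {v : Fin 3 → K} (hv : v ≠ 0) {φ : Dual K (Fin 3 → K)} (hφ : φ ≠ 0) :
    OnLine (mk K v hv) (mk K φ hφ) ↔ φ v = 0 := by
  obtain ⟨a, ha⟩ := exists_smul_eq_mk_rep K φ hφ
  rw [onLine_mk_iff, ← ha, Units.smul_def, LinearMap.smul_apply, smul_eq_zero,
    or_iff_right a.ne_zero]

theorem exists_onLine_onLine (L M : PLine K) : ∃ P : PPoint K, OnLine P L ∧ OnLine P M := by
  have : LinearMap.ker (L.rep.prod M.rep) ≠ ⊥ := LinearMap.ker_ne_bot_of_finrank_lt (by simp)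
  obtain ⟨v, hv, hv0⟩ := Submodule.exists_mem_ne_zero_of_ne_bot this
  rw [LinearMap.ker_prod, Submodule.mem_inf] at hv
  exact ⟨mk K v hv0, (onLine_mk_iff hv0 L).2 hv.1, (onLine_mk_iff hv0 M).2 hv.2⟩

theorem eq_of_onLine_of_onLine {L M : PLine K} (hLM : L ≠ M) {P Q : PPoint K}
    (hPL : OnLine P L) (hPM : OnLine P M) (hQL : OnLine Q L) (hQM : OnLine Q M) : P = Q := by
  by_contra hPQ
  set W := Submodule.span K (Set.range (Projectivization.rep ∘ ![P, Q]))
  have hW : finrank K W = 2 := by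
    have := independent_iff.1 ((independent_pair_iff_ne P Q).2 hPQ)
    rw [finrank_span_eq_card this, Fintype.card_fin]
  have hWann : finrank K W.dualAnnihilator = 1 := by
    have := Subspace.finrank_add_finrank_dualAnnihilator_eq W
    simp [hW] at this
    omega
  have hmem : ∀ N : PLine K, OnLine P N → OnLine Q N → N.rep ∈ W.dualAnnihilator := by
    intro N hP hQ
    refine (Submodule.mem_dualAnnihilator _).2 fun w hw =>
      (Submodule.span_le (p := LinearMap.ker N.rep)).2 ?_ hw
    rintro _ ⟨i, rfl⟩
    fin_cases i
    exacts [hP, hQ]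
  exact hLM (eq_of_rep_mem_of_finrank_eq_one hWann (hmem L hPL hQL) (hmem M hPM hQM))

end Incidence

section Counting

open scoped Classical

variable {K : Type*} [Field K] (𝓛 : Finset (PLine K))

noncomputable def meet (L M : PLine K) : PPoint K := (exists_onLine_onLine L M).choose

theorem onLine_meet_left (L M : PLine K) : OnLine (meet L M) L :=
  (exists_onLine_onLine L M).choose_spec.1

theorem onLine_meet_right (L M : PLine K) : OnLine (meet L M) M :=
  (exists_onLine_onLine L M).choose_spec.2

theorem eq_meet {L M : PLine K} (hLM : L ≠ M) {P : PPoint K} (hL : OnLine P L) (hM : OnLine P M) :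
    P = meet L M :=
  eq_of_onLine_of_onLine hLM hL hM (onLine_meet_left L M) (onLine_meet_right L M)

theorem mult_eq_card_filter (P : PPoint K) : mult 𝓛 P = #{L ∈ 𝓛 | OnLine P L} := by
  rw [mult, ← Set.ncard_coe_finset, coe_filter]

noncomputable def singPtsFinset : Finset (PPoint K) := 𝓛.offDiag.image fun p => meet p.1 p.2

theorem coe_singPtsFinset : (singPtsFinset 𝓛 : Set (PPoint K)) = SingPts 𝓛 := by
  ext P
  change _ ↔ 1 < mult 𝓛 P
  simp only [singPtsFinset, coe_image, Set.mem_image, mem_coe, mem_offDiag, mult_eq_card_filter,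
    one_lt_card, mem_filter, Prod.exists]
  constructor
  · rintro ⟨L, M, ⟨hL, hM, hLM⟩, rfl⟩
    exact ⟨L, ⟨hL, onLine_meet_left L M⟩, M, ⟨hM, onLine_meet_right L M⟩, hLM⟩
  · rintro ⟨L, ⟨hL, hPL⟩, M, ⟨hM, hPM⟩, hLM⟩
    exact ⟨L, M, ⟨hL, hM, hLM⟩, (eq_meet hLM hPL hPM).symm⟩

theorem filter_meet_eq (P : PPoint K) :
    {p ∈ 𝓛.offDiag | meet p.1 p.2 = P} = {L ∈ 𝓛 | OnLine P L}.offDiag := by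
  ext ⟨L, M⟩
  simp only [mem_filter, mem_offDiag]
  constructor
  · rintro ⟨⟨hL, hM, hLM⟩, rfl⟩
    exact ⟨⟨hL, onLine_meet_left L M⟩, ⟨hM, onLine_meet_right L M⟩, hLM⟩
  · rintro ⟨⟨hL, hPL⟩, ⟨hM, hPM⟩, hLM⟩
    exact ⟨⟨hL, hM, hLM⟩, (eq_meet hLM hPL hPM).symm⟩

theorem sum_mult_sq_sub_mult :
    ∑ P ∈ singPtsFinset 𝓛, ((mult 𝓛 P : ℚ) ^ 2 - mult 𝓛 P) = (#𝓛 : ℚ) ^ 2 - #𝓛 := by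
  have hcount := card_eq_sum_card_fiberwise (s := 𝓛.offDiag) (t := singPtsFinset 𝓛)
    fun _ hp => mem_image_of_mem _ hp
  simp only [filter_meet_eq, offDiag_card, ← mult_eq_card_filter] at hcount
  have := congrArg (Nat.cast : ℕ → ℚ) hcount
  push_cast [Nat.cast_sub (Nat.le_mul_self _)] at this
  simpa [sq] using this.symm

theorem mult_image {ι : Type*} {ℓ : ι → PLine K} (hℓ : Function.Injective ℓ) (s : Finset ι)
    (P : PPoint K) : mult (s.image ℓ) P = #{i ∈ s | OnLine P (ℓ i)} := by
  rw [mult_eq_card_filter, filter_image, card_image_of_injective _ hℓ]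

theorem HL_eq_card_sub_sum_mult :
    HL 𝓛 = (#𝓛 - ∑ P ∈ singPtsFinset 𝓛, (mult 𝓛 P : ℚ)) / #(singPtsFinset 𝓛) := by
  rw [HL, ← coe_singPtsFinset, finsum_mem_coe_finset, Set.ncard_coe_finset]
  have := sum_mult_sq_sub_mult 𝓛
  rw [sum_sub_distrib] at this
  congr 1
  linarith

theorem two_le_mult_of_mem_singPtsFinset {P : PPoint K} (hP : P ∈ singPtsFinset 𝓛) :
    2 ≤ mult 𝓛 P := by
  rw [← mem_coe, coe_singPtsFinset] at hP
  exact hP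

theorem singPtsFinset_nonempty (h : 2 ≤ #𝓛) : (singPtsFinset 𝓛).Nonempty := by
  obtain ⟨L, hL, M, hM, hLM⟩ := one_lt_card.1 h
  exact ⟨meet L M, mem_image.2 ⟨(L, M), mem_offDiag.2 ⟨hL, hM, hLM⟩, rfl⟩⟩

theorem HL_ge_of_two_le_card (h : 2 ≤ #𝓛) :
    #𝓛 * (4 - #𝓛) / (3 * #(singPtsFinset 𝓛)) - 4 / 3 ≤ HL 𝓛 := by
  have hs : (0 : ℚ) < #(singPtsFinset 𝓛) := mod_cast (singPtsFinset_nonempty 𝓛 h).card_pos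
  have hpt : ∀ P ∈ singPtsFinset 𝓛, 3 * (mult 𝓛 P : ℚ) - 4 ≤ (mult 𝓛 P : ℚ) ^ 2 - mult 𝓛 P := by
    intro P hP
    have : (2 : ℚ) ≤ mult 𝓛 P := by exact_mod_cast two_le_mult_of_mem_singPtsFinset 𝓛 hP
    nlinarith
  have hsum := (sum_le_sum hpt).trans_eq (sum_mult_sq_sub_mult 𝓛)
  rw [sum_sub_distrib, ← mul_sum, sum_const, nsmul_eq_mul] at hsum
  rw [HL_eq_card_sub_sum_mult, le_div_iff₀ hs]
  field_simp
  linarith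

theorem HL_of_mult_le_two (h : 2 ≤ #𝓛) (hmult : ∀ P, mult 𝓛 P ≤ 2) :
    HL 𝓛 = 2 * (2 - #𝓛) / (#𝓛 - 1) := by
  have hm : ∀ P ∈ singPtsFinset 𝓛, (mult 𝓛 P : ℚ) = 2 := fun P hP => by
    exact_mod_cast le_antisymm (hmult P) (two_le_mult_of_mem_singPtsFinset 𝓛 hP)
  have hs : (0 : ℚ) < #(singPtsFinset 𝓛) := mod_cast (singPtsFinset_nonempty 𝓛 h).card_pos
  have hd : (1 : ℚ) < #𝓛 := by exact_mod_cast h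
  have hsum := sum_mult_sq_sub_mult 𝓛
  rw [sum_congr rfl fun P hP => by rw [hm P hP]] at hsum
  rw [HL_eq_card_sub_sum_mult, sum_congr rfl hm]
  simp only [sum_const, nsmul_eq_mul] at hsum ⊢
  rw [div_eq_div_iff hs.ne' (by linarith)]
  nlinarith

end Counting

section Example

open scoped Classical

variable (K : Type*) [Field K]

noncomputable def dualLine : ℙ K (Fin 3 → K) → PLine K :=
  map (dotProductEquiv K (Fin 3)).toLinearMap (dotProductEquiv K (Fin 3)).injective

def fourLineCoeffs : Fin 4 → Fin 3 → K := ![![1, 0, 0], ![0, 1, 0], ![0, 0, 1], ![1, 1, 1]]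

theorem fourLineCoeffs_ne_zero (i : Fin 4) : fourLineCoeffs K i ≠ 0 := by
  fin_cases i <;> simp [fourLineCoeffs, funext_iff, Fin.exists_fin_succ]

variable {K}

theorem onLine_dualLine_iff {P : PPoint K} {Q : ℙ K (Fin 3 → K)} :
    OnLine P (dualLine K Q) ↔ Q.orthogonal P := by
  induction P using Projectivization.ind with | h v hv =>
  induction Q using Projectivization.ind with | h c hc =>
  rw [dualLine, map_mk, onLine_mk_mk_iff, orthogonal_mk]
  rfl

theorem dualLine_injective : Function.Injective (dualLine K) := map_injective _ _

noncomputable def fourLine (i : Fin 4) : PLine K :=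
  dualLine K (mk K (fourLineCoeffs K i) (fourLineCoeffs_ne_zero K i))

theorem fourLine_injective : Function.Injective (fourLine (K := K)) := by
  intro i j h
  have := dualLine_injective h
  rw [mk_eq_mk_iff_crossProduct_eq_zero, funext_iff] at this
  fin_cases i <;> fin_cases j <;> simp_all [fourLineCoeffs, cross_apply, Fin.forall_fin_succ]

theorem card_filter_dotProduct_fourLineCoeffs_le_two {v : Fin 3 → K} (hv : v ≠ 0) :
    #{i | fourLineCoeffs K i ⬝ᵥ v = 0} ≤ 2 := by
  have hv' : v 0 ≠ 0 ∨ v 1 ≠ 0 ∨ v 2 ≠ 0 := by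
    contrapose! hv
    ext i
    fin_cases i <;> simp [hv]
  rw [card_filter, Fin.sum_univ_four]
  simp only [dotProduct, fourLineCoeffs, Fin.sum_univ_three, Matrix.cons_val', Matrix.cons_val,
    Matrix.cons_val_zero, Matrix.cons_val_one, Matrix.cons_val_fin_one, one_mul, zero_mul, add_zero,
    zero_add]
  split_ifs <;> simp_all

theorem mult_image_fourLine_le_two (P : PPoint K) : mult (univ.image fourLine) P ≤ 2 := by
  induction P using Projectivization.ind with | h v hv =>
  rw [mult_image fourLine_injective]
  simpa only [fourLine, onLine_dualLine_iff, orthogonal_mk]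
    using card_filter_dotProduct_fourLineCoeffs_le_two hv

theorem exists_card_eq_four_HL_eq : ∃ 𝓛 : Finset (PLine K), #𝓛 = 4 ∧ HL 𝓛 = -4 / 3 := by
  have hcard : #(univ.image (fourLine (K := K))) = 4 := by
    rw [card_image_of_injective _ fourLine_injective, card_fin]
  refine ⟨_, hcard, ?_⟩
  rw [HL_of_mult_le_two _ (by omega) mult_image_fourLine_le_two, hcard]
  norm_num

end Example

/-- The absolute linear Harbourne constant for `4` lines equals `−4/3`. -/
theorem HL_four_lines :
    (∀ (K : Type*) [Field K] (𝓛 : Finset (PLine K)), 𝓛.card = 4 → -4/3 ≤ HL 𝓛) ∧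
    (∃ 𝓛 : Finset (PLine ℂ), 𝓛.card = 4 ∧ HL 𝓛 = -4/3) := by
  refine ⟨fun K _ 𝓛 h => ?_, exists_card_eq_four_HL_eq⟩
  simpa [h, neg_div] using HL_ge_of_two_le_card 𝓛 (by omega)
end
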